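/- arXiv:1105.4746 — 2 statements merged into one kernel-verified Lean document; each statement's English description precedes it below -/
import Mathlib

section
/- Let p : ℝ^{2n} → ℂ be continuous and z ∈ ℂ. Suppose the restriction of p to each ray r ↦ p(x, rξ), |ξ| = 1, is a polynomial of degree exactly m in r with leading coefficient bounded away from 0 on a compact set K of (x, ξ) with |ξ| = 1. Then the volume function V_z(t) = vol{ρ ∈ K' : |p(ρ) − z|² ≤ t} (K' the cone over K intersected with a bounded set) satisfies V_z(t) = O(t^{1/(2m)}) as t → 0⁺. -/
/-!
On each ray `r ↦ (x, r θ)` with `(x, θ) ∈ K`, `p - z` is a complex polynomial of degree `m` in `r`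
whose leading coefficient has modulus at least `c`. Factoring it over its roots, `|p - z| ≤ s`
forces `r` to lie within `(s / c)^(1/m)` of the real part of one of the `m` roots, so the
sublevel set on the ray has length at most `2m (s / c)^(1/m)`. In polar coordinates `ξ = r θ`
the Jacobian `r^(dim - 1)` is at most `R^(dim - 1)` on the truncated cone, so integrating over
`θ` in the sphere and then over `x` in the compact projection of `K` gives a volume
`O(s^(1/m))`; the theorem is the case `s = √t`.
-/

open MeasureTheory Set Metric Polynomial
open scoped ENNReal

namespace Polynomial

theorem exists_mem_roots_leadingCoeff_mul_norm_sub_pow_le {K : Type*} [NormedField K]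
    {Q : K[X]} (hQ : Q.Splits) (hdeg : 0 < Q.natDegree) (w : K) :
    ∃ ζ ∈ Q.roots, ‖Q.leadingCoeff‖ * ‖w - ζ‖ ^ Q.natDegree ≤ ‖Q.eval w‖ := by
  classical
  have hcard := hQ.natDegree_eq_card_roots
  have hne : Q.roots.toFinset.Nonempty := by
    rw [Multiset.toFinset_nonempty, ← Multiset.card_pos, ← hcard]; exact hdeg
  obtain ⟨ζ, hζ, hmin⟩ := Q.roots.toFinset.exists_min_image (fun ζ => ‖w - ζ‖) hne
  refine ⟨ζ, Multiset.mem_toFinset.1 hζ, ?_⟩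
  have hprod : ‖w - ζ‖ ^ Q.natDegree ≤ (Q.roots.map fun ζ' => ‖w - ζ'‖).prod := by
    have := Multiset.prod_map_le_prod_map₀ (s := Q.roots) (fun _ => ‖w - ζ‖) (fun ζ' => ‖w - ζ'‖)
      (fun _ _ => norm_nonneg _) fun ζ' hζ' => hmin ζ' (Multiset.mem_toFinset.2 hζ')
    simpa [hcard] using this
  calc ‖Q.leadingCoeff‖ * ‖w - ζ‖ ^ Q.natDegree
      ≤ ‖Q.leadingCoeff‖ * (Q.roots.map fun ζ' => ‖w - ζ'‖).prod := by gcongr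
    _ = ‖Q.eval w‖ := by
      rw [hQ.eval_eq_prod_roots, norm_mul, ← normHom_apply (Multiset.prod _), map_multiset_prod,
        Multiset.map_map]
      rfl

theorem volume_setOf_norm_eval_le {Q : ℂ[X]} (hdeg : 0 < Q.natDegree) {c s : ℝ} (hc : 0 < c)
    (hlead : c ≤ ‖Q.leadingCoeff‖) (hs : 0 ≤ s) :
    volume {r : ℝ | ‖Q.eval (r : ℂ)‖ ≤ s} ≤
      ENNReal.ofReal (2 * Q.natDegree * (s / c) ^ (1 / (Q.natDegree : ℝ))) := by
  set d := Q.natDegree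
  set δ := (s / c) ^ (1 / (d : ℝ)) with hδ_def
  have hQ : Q.Splits := IsAlgClosed.splits Q
  have hnear : {r : ℝ | ‖Q.eval (r : ℂ)‖ ≤ s} ⊆ ⋃ ζ ∈ Q.roots.toFinset, closedBall ζ.re δ := by
    intro r hr
    obtain ⟨ζ, hζ, hle⟩ := exists_mem_roots_leadingCoeff_mul_norm_sub_pow_le hQ hdeg (r : ℂ)
    have hpow : ‖(r : ℂ) - ζ‖ ^ d ≤ s / c := by
      rw [le_div_iff₀' hc]
      exact (mul_le_mul_of_nonneg_right hlead (by positivity)).trans (hle.trans hr)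
    have hdist : ‖(r : ℂ) - ζ‖ ≤ δ := by
      rwa [hδ_def, one_div,
        Real.le_rpow_inv_iff_of_pos (norm_nonneg _) (by positivity) (by positivity),
        Real.rpow_natCast]
    refine mem_biUnion (Multiset.mem_toFinset.2 hζ) ?_
    rw [mem_closedBall, Real.dist_eq]
    simpa using (Complex.abs_re_le_norm _).trans hdist
  calc volume {r : ℝ | ‖Q.eval (r : ℂ)‖ ≤ s}
      ≤ ∑ ζ ∈ Q.roots.toFinset, volume (closedBall ζ.re δ) :=
      (measure_mono hnear).trans (measure_biUnion_finset_le _ _)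
    _ = Q.roots.toFinset.card * ENNReal.ofReal (2 * δ) := by
      simp [Real.volume_closedBall, Finset.sum_const]
    _ ≤ d * ENNReal.ofReal (2 * δ) := by
      gcongr
      exact_mod_cast (Multiset.toFinset_card_le _).trans hQ.natDegree_eq_card_roots.ge
    _ = ENNReal.ofReal (2 * d * δ) := by
      rw [← ENNReal.ofReal_natCast, ← ENNReal.ofReal_mul (by positivity)]
      ring_nf

variable {R : Type*} [Ring R] {b : ℕ → R} {m : ℕ}

theorem coeff_sum_range_C_mul_X_pow_sub_C (hm : m ≠ 0) (z : R) :
    (∑ i ∈ Finset.range (m + 1), C (b i) * X ^ i - C z).coeff m = b m := by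
  simp [coeff_C, hm]

theorem natDegree_sum_range_C_mul_X_pow_sub_C (hm : m ≠ 0) (hb : b m ≠ 0) (z : R) :
    (∑ i ∈ Finset.range (m + 1), C (b i) * X ^ i - C z).natDegree = m := by
  refine natDegree_eq_of_le_of_coeff_ne_zero ?_ (coeff_sum_range_C_mul_X_pow_sub_C hm z ▸ hb)
  rw [natDegree_sub_C]
  exact natDegree_sum_le_of_forall_le _ _ fun i hi =>
    (natDegree_C_mul_X_pow_le _ _).trans (Finset.mem_range_succ_iff.1 hi)

theorem leadingCoeff_sum_range_C_mul_X_pow_sub_C (hm : m ≠ 0) (hb : b m ≠ 0) (z : R) :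
    (∑ i ∈ Finset.range (m + 1), C (b i) * X ^ i - C z).leadingCoeff = b m := by
  rw [leadingCoeff, natDegree_sum_range_C_mul_X_pow_sub_C hm hb,
    coeff_sum_range_C_mul_X_pow_sub_C hm]

end Polynomial

theorem volume_setOf_norm_sum_range_mul_pow_sub_le {b : ℕ → ℂ} {m : ℕ} (hm : 1 ≤ m) (z : ℂ)
    {c s : ℝ} (hc : 0 < c) (hb : c ≤ ‖b m‖) (hs : 0 ≤ s) :
    volume {r : ℝ | ‖∑ i ∈ Finset.range (m + 1), b i * (r : ℂ) ^ i - z‖ ≤ s} ≤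
      ENNReal.ofReal (2 * m * (s / c) ^ (1 / (m : ℝ))) := by
  have hm0 : m ≠ 0 := Nat.one_le_iff_ne_zero.1 hm
  have hb0 : b m ≠ 0 := norm_pos_iff.1 (hc.trans_le hb)
  have hdeg := natDegree_sum_range_C_mul_X_pow_sub_C hm0 hb0 z
  have := volume_setOf_norm_eval_le (hdeg ▸ hm) hc
    ((leadingCoeff_sum_range_C_mul_X_pow_sub_C hm0 hb0 z).symm ▸ hb) hs
  simpa [hdeg, eval_finsetSum] using this

theorem ENNReal.exists_pos_forall_mul_ofReal_le {M : ℝ≥0∞} (hM : M ≠ ⊤) :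
    ∃ C > 0, ∀ x : ℝ, 0 ≤ x → M * ENNReal.ofReal x ≤ ENNReal.ofReal (C * x) := by
  refine ⟨M.toReal + 1, by positivity, fun x hx => ?_⟩
  rw [ENNReal.ofReal_mul (by positivity)]
  gcongr
  conv_lhs => rw [← ENNReal.ofReal_toReal hM]
  exact ENNReal.ofReal_le_ofReal (by linarith)

namespace MeasureTheory

namespace Measure

theorem prod_le_mul_of_forall_slice_le {α β : Type*} [MeasurableSpace α]
    [MeasurableSpace β] {μ : Measure α} {ν : Measure β} [SFinite ν] {S : Set (α × β)}
    (hS : MeasurableSet S) {P : Set α} (hP : MeasurableSet P) (hSP : ∀ ρ ∈ S, ρ.1 ∈ P)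
    {A : ℝ≥0∞} (hA : ∀ x ∈ P, ν (Prod.mk x ⁻¹' S) ≤ A) : μ.prod ν S ≤ A * μ P := by
  rw [Measure.prod_apply hS, ← lintegral_indicator_const hP]
  refine lintegral_mono fun x => ?_
  by_cases hx : x ∈ P
  · simpa [hx] using hA x hx
  · have : Prod.mk x ⁻¹' S = ∅ := eq_empty_of_forall_notMem fun y hy => hx (hSP _ hy)
    simp [this]

theorem volumeIoiPow_le_ofReal_pow_mul {k : ℕ} {F : Set (Ioi (0 : ℝ))} (hF : MeasurableSet F)
    {R : ℝ} (hFR : ∀ r ∈ F, (r : ℝ) ≤ R) :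
    volumeIoiPow k F ≤ ENNReal.ofReal (R ^ k) * volume ((↑) '' F : Set ℝ) := by
  rw [volumeIoiPow, withDensity_apply _ hF, ← comap_subtype_coe_apply measurableSet_Ioi,
    ← setLIntegral_const]
  exact setLIntegral_mono measurable_const fun r hr =>
    ENNReal.ofReal_le_ofReal (pow_le_pow_left₀ r.2.out.le (hFR r hr) k)

end Measure

variable {E : Type*} [NormedAddCommGroup E] [NormedSpace ℝ E] [FiniteDimensional ℝ E]
  [MeasurableSpace E] [BorelSpace E] [Nontrivial E]

theorem measure_le_of_forall_volume_ray_le (μ : Measure E) [μ.IsAddHaarMeasure] {S : Set E}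
    (hS : MeasurableSet S) {R : ℝ} (hSR : S ⊆ closedBall 0 R) {ε : ℝ≥0∞}
    (hray : ∀ θ ∈ sphere (0 : E) 1, volume {r : ℝ | 0 < r ∧ r • θ ∈ S} ≤ ε) :
    μ S ≤ ENNReal.ofReal (R ^ (Module.finrank ℝ E - 1)) * ε * μ.toSphere univ := by
  set B : Set (sphere (0 : E) 1 × Ioi (0 : ℝ)) := {q | (q.2 : ℝ) • (q.1 : E) ∈ S}
  have hB : MeasurableSet B := hS.preimage (by fun_prop)
  have hpolar : homeomorphUnitSphereProd E ⁻¹' B = (↑) ⁻¹' S := by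
    ext ⟨x, hx⟩
    simp [B, smul_inv_smul₀ (norm_ne_zero_iff.2 hx)]
  have hfiber : ∀ θ : sphere (0 : E) 1,
      Measure.volumeIoiPow (Module.finrank ℝ E - 1) (Prod.mk θ ⁻¹' B) ≤
        ENNReal.ofReal (R ^ (Module.finrank ℝ E - 1)) * ε := by
    intro θ
    refine (Measure.volumeIoiPow_le_ofReal_pow_mul (R := R) (measurable_prodMk_left hB)
      fun r hr => ?_).trans ?_
    · simpa [norm_smul, abs_of_pos r.2.out] using hSR hr
    · gcongr
      refine (measure_mono ?_).trans (hray θ θ.2)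
      rintro _ ⟨r, hr, rfl⟩
      exact ⟨r.2, hr⟩
  calc μ S = μ (S \ {0}) := (measure_sdiff_null (measure_singleton 0)).symm
    _ = μ.comap (↑) ((↑) ⁻¹' S : Set ({0}ᶜ : Set E)) := by
      rw [comap_subtype_coe_apply (measurableSet_singleton 0).compl, image_preimage_eq_inter_range,
        Subtype.range_coe]
      rfl
    _ = (μ.toSphere.prod (Measure.volumeIoiPow (Module.finrank ℝ E - 1))) B := by
      rw [← hpolar, μ.measurePreserving_homeomorphUnitSphereProd.measure_preimage
        hB.nullMeasurableSet]
    _ = ∫⁻ θ, Measure.volumeIoiPow (Module.finrank ℝ E - 1) (Prod.mk θ ⁻¹' B) ∂μ.toSphere :=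
      Measure.prod_apply hB
    _ ≤ ∫⁻ _, ENNReal.ofReal (R ^ (Module.finrank ℝ E - 1)) * ε ∂μ.toSphere := lintegral_mono hfiber
    _ = _ := lintegral_const _

end MeasureTheory

section RadialCone

variable {E F : Type*} [NormedAddCommGroup F] [NormedSpace ℝ F]

def radialCone (K : Set (E × F)) : Set (E × F) :=
  {ρ | ∃ r : ℝ, 0 ≤ r ∧ ∃ w ∈ K, ρ = (w.1, r • w.2)}

variable {K : Set (E × F)}

theorem isCompact_radialCone_inter_closedBall [NormedAddCommGroup E] (hK : IsCompact K)
    (hK1 : ∀ w ∈ K, ‖w.2‖ = 1) (R : ℝ) : IsCompact (radialCone K ∩ closedBall 0 R) := by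
  have hcone : radialCone K ∩ closedBall 0 R =
      (fun q : ℝ × (E × F) => (q.2.1, q.1 • q.2.2)) '' (Icc 0 R ×ˢ K) ∩ closedBall 0 R := by
    ext ρ
    constructor
    · rintro ⟨⟨r, hr, w, hw, rfl⟩, hρ⟩
      have : ‖r • w.2‖ ≤ R := (norm_snd_le _).trans (mem_closedBall_zero_iff.1 hρ)
      rw [norm_smul, hK1 w hw, mul_one, Real.norm_of_nonneg hr] at this
      exact ⟨⟨(r, w), ⟨⟨hr, this⟩, hw⟩, rfl⟩, hρ⟩
    · rintro ⟨⟨⟨r, w⟩, ⟨⟨hr, -⟩, hw⟩, rfl⟩, hρ⟩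
      exact ⟨⟨r, hr, w, hw, rfl⟩, hρ⟩
  rw [hcone]
  exact ((isCompact_Icc.prod hK).image (by fun_prop)).inter_right isClosed_closedBall

theorem mem_of_mk_smul_mem_radialCone (hK1 : ∀ w ∈ K, ‖w.2‖ = 1) {x : E} {θ : F} (hθ : ‖θ‖ = 1)
    {r : ℝ} (hr : 0 < r) (h : (x, r • θ) ∈ radialCone K) : (x, θ) ∈ K := by
  obtain ⟨r', hr', w, hw, hxw⟩ := h
  rw [Prod.ext_iff] at hxw
  obtain ⟨rfl, hθw⟩ := hxw
  have hrr' : r = r' := by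
    simpa [norm_smul, hθ, hK1 w hw, abs_of_pos hr, abs_of_nonneg hr'] using congrArg norm hθw
  subst hrr'
  rwa [smul_right_injective F hr.ne' hθw]

end RadialCone

section RadialPolynomial

variable {E F : Type*} [NormedAddCommGroup F] [NormedSpace ℝ F]
  {m : ℕ} {p : E × F → ℂ} {K : Set (E × F)} {a : E × F → ℕ → ℂ} {c : ℝ}

theorem volume_ray_sublevel_le (hm : 1 ≤ m) (hK1 : ∀ w ∈ K, ‖w.2‖ = 1)
    (hpoly : ∀ w ∈ K, ∀ r : ℝ,
      p (w.1, r • w.2) = ∑ i ∈ Finset.range (m + 1), a w i * (r : ℂ) ^ i)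
    (hc : 0 < c) (hlead : ∀ w ∈ K, c ≤ ‖a w m‖) (z : ℂ) (x : E) {θ : F} (hθ : ‖θ‖ = 1)
    {s : ℝ} (hs : 0 ≤ s) :
    volume {r : ℝ | 0 < r ∧ (x, r • θ) ∈ radialCone K ∧ ‖p (x, r • θ) - z‖ ≤ s} ≤
      ENNReal.ofReal (2 * m * (s / c) ^ (1 / (m : ℝ))) := by
  by_cases hxθ : (x, θ) ∈ K
  · refine (measure_mono fun r hr => ?_).trans
      (volume_setOf_norm_sum_range_mul_pow_sub_le hm z hc (hlead _ hxθ) hs)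
    simpa [← hpoly _ hxθ] using hr.2.2
  · have : {r : ℝ | 0 < r ∧ (x, r • θ) ∈ radialCone K ∧ ‖p (x, r • θ) - z‖ ≤ s} = ∅ :=
      eq_empty_of_forall_notMem fun r hr =>
        hxθ (mem_of_mk_smul_mem_radialCone hK1 hθ hr.1 hr.2.1)
    rw [this, measure_empty]
    exact zero_le

theorem prod_sublevel_radialCone_inter_closedBall_le [NormedAddCommGroup E] [MeasurableSpace E]
    [BorelSpace E] [FiniteDimensional ℝ F] [MeasurableSpace F] [BorelSpace F]
    (μ : Measure E) (ν : Measure F) [ν.IsAddHaarMeasure] (hm : 1 ≤ m) (hp : Continuous p)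
    (hK : IsCompact K) (hK1 : ∀ w ∈ K, ‖w.2‖ = 1)
    (hpoly : ∀ w ∈ K, ∀ r : ℝ,
      p (w.1, r • w.2) = ∑ i ∈ Finset.range (m + 1), a w i * (r : ℂ) ^ i)
    (hc : 0 < c) (hlead : ∀ w ∈ K, c ≤ ‖a w m‖) (z : ℂ) (R : ℝ) {s : ℝ} (hs : 0 ≤ s) :
    μ.prod ν {ρ ∈ radialCone K ∩ closedBall 0 R | ‖p ρ - z‖ ≤ s} ≤
      ENNReal.ofReal (R ^ (Module.finrank ℝ F - 1)) *
        ENNReal.ofReal (2 * m * (s / c) ^ (1 / (m : ℝ))) * ν.toSphere univ *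
          μ (Prod.fst '' K) := by
  rcases subsingleton_or_nontrivial F with hF | hF
  · have hK : K = ∅ := eq_empty_of_forall_notMem fun w hw => by
      simpa [Subsingleton.elim w.2 0] using hK1 w hw
    simp [hK, radialCone]
  set S := {ρ ∈ radialCone K ∩ closedBall 0 R | ‖p ρ - z‖ ≤ s}
  have hS : MeasurableSet S := ((isCompact_radialCone_inter_closedBall hK hK1 R).inter_right
    (isClosed_le (by fun_prop : Continuous fun ρ => ‖p ρ - z‖) continuous_const)).measurableSet
  refine Measure.prod_le_mul_of_forall_slice_le hS (hK.image continuous_fst).measurableSet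
    ?_ fun x _ => measure_le_of_forall_volume_ray_le ν (measurable_prodMk_left hS) ?_ fun θ hθ => ?_
  · rintro _ ⟨⟨⟨r, -, w, hw, rfl⟩, -⟩, -⟩
    exact ⟨w, hw, rfl⟩
  · exact fun ξ hξ => mem_closedBall_zero_iff.2
      ((norm_snd_le (x, ξ)).trans (mem_closedBall_zero_iff.1 hξ.1.2))
  · refine (measure_mono fun r hr => ?_).trans
      (volume_ray_sublevel_le hm hK1 hpoly hc hlead z x (mem_sphere_zero_iff_norm.1 hθ) hs)
    exact ⟨hr.1, hr.2.1.1, hr.2.2⟩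

theorem exists_pos_prod_sublevel_radialCone_inter_closedBall_le [NormedAddCommGroup E]
    [MeasurableSpace E] [BorelSpace E] [FiniteDimensional ℝ F] [MeasurableSpace F] [BorelSpace F]
    (μ : Measure E) [IsFiniteMeasureOnCompacts μ] (ν : Measure F) [ν.IsAddHaarMeasure]
    (hm : 1 ≤ m) (hp : Continuous p) (hK : IsCompact K) (hK1 : ∀ w ∈ K, ‖w.2‖ = 1)
    (hpoly : ∀ w ∈ K, ∀ r : ℝ,
      p (w.1, r • w.2) = ∑ i ∈ Finset.range (m + 1), a w i * (r : ℂ) ^ i)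
    (hc : 0 < c) (hlead : ∀ w ∈ K, c ≤ ‖a w m‖) (z : ℂ) (R : ℝ) :
    ∃ C > 0, ∀ s : ℝ, 0 ≤ s →
      μ.prod ν {ρ ∈ radialCone K ∩ closedBall 0 R | ‖p ρ - z‖ ≤ s} ≤
        ENNReal.ofReal (C * s ^ (1 / (m : ℝ))) := by
  set M := ENNReal.ofReal (R ^ (Module.finrank ℝ F - 1)) *
    ENNReal.ofReal (2 * m / c ^ (1 / (m : ℝ))) * ν.toSphere univ * μ (Prod.fst '' K)
  have hM : M ≠ ⊤ := by
    have := (hK.image continuous_fst).measure_lt_top (μ := μ)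
    finiteness
  obtain ⟨C, hC, hMC⟩ := ENNReal.exists_pos_forall_mul_ofReal_le hM
  refine ⟨C, hC, fun s hs => ?_⟩
  calc _ ≤ _ := prod_sublevel_radialCone_inter_closedBall_le μ ν hm hp hK hK1 hpoly hc hlead z R hs
    _ = M * ENNReal.ofReal (s ^ (1 / (m : ℝ))) := by
      rw [Real.div_rpow hs hc.le, mul_div_assoc', mul_div_right_comm,
        ENNReal.ofReal_mul (by positivity)]
      ring
    _ ≤ _ := hMC _ (by positivity)

end RadialPolynomial

theorem volume_bound_elliptic_symbol_general
    {n m : ℕ} (hm : 1 ≤ m)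
    (p : EuclideanSpace ℝ (Fin n) × EuclideanSpace ℝ (Fin n) → ℂ)
    (hp : Continuous p) (z : ℂ)
    (K : Set (EuclideanSpace ℝ (Fin n) × EuclideanSpace ℝ (Fin n)))
    (hK : IsCompact K) (hKsphere : ∀ w ∈ K, ‖w.2‖ = 1)
    (a : EuclideanSpace ℝ (Fin n) × EuclideanSpace ℝ (Fin n) → ℕ → ℂ)
    (hpoly : ∀ w ∈ K, ∀ r : ℝ,
      p (w.1, r • w.2) = ∑ i ∈ Finset.range (m + 1), a w i * (r : ℂ) ^ i)
    (c : ℝ) (hc : 0 < c) (hlead : ∀ w ∈ K, c ≤ ‖a w m‖)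
    (R : ℝ)
    (K' : Set (EuclideanSpace ℝ (Fin n) × EuclideanSpace ℝ (Fin n)))
    (hK' : K' = {ρ | ∃ r : ℝ, 0 ≤ r ∧ ∃ w ∈ K, ρ = (w.1, r • w.2)} ∩ Metric.closedBall 0 R) :
    ∃ C > 0, ∀ t : ℝ, 0 < t → t ≤ 1 →
      volume {ρ ∈ K' | ‖p ρ - z‖ ^ 2 ≤ t} ≤
        ENNReal.ofReal (C * t ^ (1 / (2 * (m : ℝ)))) := by
  obtain ⟨C, hC, hbound⟩ := exists_pos_prod_sublevel_radialCone_inter_closedBall_le volume volume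
    hm hp hK hKsphere hpoly hc hlead z R
  refine ⟨C, hC, fun t ht _ => ?_⟩
  have hrate : √t ^ (1 / (m : ℝ)) = t ^ (1 / (2 * (m : ℝ))) := by
    rw [Real.sqrt_eq_rpow, ← Real.rpow_mul ht.le]
    ring_nf
  simp_rw [hK', ← Real.le_sqrt (norm_nonneg _) ht.le, ← hrate, Measure.volume_eq_prod]
  exact hbound _ (Real.sqrt_nonneg t)

/-- Volume bound with exponent `κ = 1/(2m)` for elliptic symbols. Let `p : ℝⁿ × ℝⁿ → ℂ` be
continuous, and suppose on a compact set `K` of points `(x, ξ)` with `‖ξ‖ = 1` each radial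
restriction `r ↦ p (x, r ξ)` is a polynomial of degree `m` in `r` whose leading coefficient
is bounded below by `c > 0`. Then, with `K'` the cone over `K` intersected with a bounded
set, `V_z(t) = vol {ρ ∈ K' : |p(ρ) − z|² ≤ t}` satisfies `V_z(t) = O(t^{1/(2m)})`,
`0 < t ≤ 1`. -/
theorem volume_bound_elliptic_symbol
    {n m : ℕ} (hm : 1 ≤ m)
    (p : EuclideanSpace ℝ (Fin n) × EuclideanSpace ℝ (Fin n) → ℂ)
    (hp : Continuous p) (z : ℂ)
    (K : Set (EuclideanSpace ℝ (Fin n) × EuclideanSpace ℝ (Fin n)))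
    (hK : IsCompact K) (hKsphere : ∀ w ∈ K, ‖w.2‖ = 1)
    (a : EuclideanSpace ℝ (Fin n) × EuclideanSpace ℝ (Fin n) → ℕ → ℂ)
    (hpoly : ∀ w ∈ K, ∀ r : ℝ,
      p (w.1, r • w.2) = ∑ i ∈ Finset.range (m + 1), a w i * (r : ℂ) ^ i)
    (c : ℝ) (hc : 0 < c) (hlead : ∀ w ∈ K, c ≤ ‖a w m‖)
    (R : ℝ) (hR : 0 < R)
    (K' : Set (EuclideanSpace ℝ (Fin n) × EuclideanSpace ℝ (Fin n)))
    (hK' : K' = {ρ | ∃ r : ℝ, 0 ≤ r ∧ ∃ w ∈ K, ρ = (w.1, r • w.2)} ∩ Metric.closedBall 0 R) :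
    ∃ C > 0, ∀ t : ℝ, 0 < t → t ≤ 1 →
      volume {ρ ∈ K' | ‖p ρ - z‖ ^ 2 ≤ t} ≤
        ENNReal.ofReal (C * t ^ (1 / (2 * (m : ℝ)))) :=
  volume_bound_elliptic_symbol_general hm p hp z K hK hKsphere a hpoly c hc hlead R K' hK'
end

section
/- Let S be a compact connected real-analytic manifold and F : S → ℝ a non-constant real-analytic function. Then there exists N₀ ∈ ℕ, N₀ ≥ 1, such that for every w ∈ S, some derivative ∇^k F(w) with 1 ≤ k ≤ N₀ is nonzero. -/
/-!
At a point where every derivative of order `≥ 1` vanishes, the Taylor expansion shows that an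
analytic function is locally constant, so by the identity theorem it is constant on the whole
connected domain. Hence at each point `w` of `S` some derivative `∇^k F(w)` with `k ≥ 1` is
nonzero, and by continuity it stays nonzero near `w`; finitely many such neighbourhoods cover
the compact set `S`, and the largest of their orders is the uniform bound.
-/

open Filter Topology Set

theorem IsCompact.exists_bound_of_forall_eventually {X : Type*} [TopologicalSpace X]
    {s : Set X} (hs : IsCompact s) {P : ℕ → X → Prop}
    (h : ∀ x ∈ s, ∃ n, ∀ᶠ y in 𝓝 x, P n y) :
    ∃ N, ∀ x ∈ s, ∃ n ≤ N, P n x := by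
  choose! n hn using h
  obtain ⟨t, hts, hcover⟩ := hs.elim_nhds_subcover (fun x ↦ {y | P (n x) y}) hn
  refine ⟨t.sup n, fun x hx ↦ ?_⟩
  obtain ⟨c, hct, hc⟩ := mem_iUnion₂.mp (hcover hx)
  exact ⟨n c, Finset.le_sup hct, hc⟩

section Analytic

variable {𝕜 : Type*} [NontriviallyNormedField 𝕜] [CharZero 𝕜]
  {E : Type*} [NormedAddCommGroup E] [NormedSpace 𝕜 E]
  {F : Type*} [NormedAddCommGroup F] [NormedSpace 𝕜 F] [CompleteSpace F]
  {f : E → F}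

theorem AnalyticAt.eventually_eq_of_iteratedFDeriv_eq_zero {x : E} (hf : AnalyticAt 𝕜 f x)
    (h : ∀ n, 1 ≤ n → iteratedFDeriv 𝕜 n f x = 0) :
    ∀ᶠ y in 𝓝 x, f y = f x := by
  obtain ⟨p, r, hp⟩ := hf
  have taylor : ∀ y ∈ Metric.eball (0 : E) r, f (x + y) = f x := by
    intro y hy
    have hconst : HasSum (fun n ↦ (n.factorial : 𝕜)⁻¹ • iteratedFDeriv 𝕜 n f x fun _ ↦ y)
        (f x) := by
      convert hasSum_single (f := fun n ↦ (n.factorial : 𝕜)⁻¹ • iteratedFDeriv 𝕜 n f x fun _ ↦ y)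
        0 fun n hn ↦ by simp [h n (Nat.one_le_iff_ne_zero.mpr hn)]
      simp
    exact (hp.hasSum_iteratedFDeriv hy).unique hconst
  filter_upwards [Metric.eball_mem_nhds x hp.r_pos] with y hy
  simpa using taylor (y - x) (by simpa [edist_eq_enorm_sub] using hy)

theorem AnalyticOnNhd.exists_iteratedFDeriv_ne_zero {U : Set E} (hf : AnalyticOnNhd 𝕜 f U)
    (hU : IsPreconnected U) (hnonconst : ∃ a ∈ U, ∃ b ∈ U, f a ≠ f b) {w : E} (hw : w ∈ U) :
    ∃ n, 1 ≤ n ∧ iteratedFDeriv 𝕜 n f w ≠ 0 := by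
  by_contra! h
  have hconst : EqOn f (fun _ ↦ f w) U := hf.eqOn_of_preconnected_of_eventuallyEq
    analyticOnNhd_const hU hw ((hf w hw).eventually_eq_of_iteratedFDeriv_eq_zero h)
  obtain ⟨a, ha, b, hb, hab⟩ := hnonconst
  exact hab ((hconst ha).trans (hconst hb).symm)

end Analytic

theorem exists_uniform_finite_order_of_analytic_nonconstant_general
    {E : Type*} [NormedAddCommGroup E] [NormedSpace ℝ E]
    (U : Set E) (hUconn : IsConnected U)
    (F : E → ℝ) (hF : AnalyticOnNhd ℝ F U)
    (hnonconst : ∃ a ∈ U, ∃ b ∈ U, F a ≠ F b)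
    (S : Set E) (hS : IsCompact S) (hSU : S ⊆ U) :
    ∃ N₀ : ℕ, 1 ≤ N₀ ∧ ∀ w ∈ S, ∃ k : ℕ, 1 ≤ k ∧ k ≤ N₀ ∧
      iteratedFDeriv ℝ k F w ≠ 0 := by
  have locally : ∀ w ∈ S, ∃ k, ∀ᶠ y in 𝓝 w, 1 ≤ k ∧ iteratedFDeriv ℝ k F y ≠ 0 := by
    intro w hw
    obtain ⟨k, hk, hne⟩ :=
      hF.exists_iteratedFDeriv_ne_zero hUconn.isPreconnected hnonconst (hSU hw)
    have hcont := (hF w (hSU hw)).contDiffAt.continuousAt_iteratedFDeriv (k := k) le_top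
    exact ⟨k, (hcont.eventually_ne hne).mono fun y hy ↦ ⟨hk, hy⟩⟩
  obtain ⟨N, hN⟩ := hS.exists_bound_of_forall_eventually locally
  refine ⟨N + 1, Nat.le_add_left 1 N, fun w hw ↦ ?_⟩
  obtain ⟨k, hkN, hk, hne⟩ := hN w hw
  exact ⟨k, hk, hkN.trans N.le_succ, hne⟩

/-- Let `F` be a non-constant real-analytic function on a connected open set `U` and
`S ⊆ U` compact (e.g. `S` a compact connected analytic manifold). Then there is an
`N₀ ≥ 1` such that at every point `w ∈ S` some derivative `∇^k F(w)` with `1 ≤ k ≤ N₀`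
is nonzero. -/
theorem exists_uniform_finite_order_of_analytic_nonconstant
    {E : Type*} [NormedAddCommGroup E] [NormedSpace ℝ E]
    (U : Set E) (hU : IsOpen U) (hUconn : IsConnected U)
    (F : E → ℝ) (hF : AnalyticOnNhd ℝ F U)
    (hnonconst : ∃ a ∈ U, ∃ b ∈ U, F a ≠ F b)
    (S : Set E) (hS : IsCompact S) (hSU : S ⊆ U) :
    ∃ N₀ : ℕ, 1 ≤ N₀ ∧ ∀ w ∈ S, ∃ k : ℕ, 1 ≤ k ∧ k ≤ N₀ ∧
      iteratedFDeriv ℝ k F w ≠ 0 :=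
  exists_uniform_finite_order_of_analytic_nonconstant_general U hUconn F hF hnonconst S hS hSU
end
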